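/- arXiv:2102.07945 — 3 statements merged into one kernel-verified Lean document; each statement's English description precedes it below -/
import Mathlib

section
/- Let w be a submodular function on a finite set V with w(∅) = 0 and base polytope B. Let x ∈ R^V take unique values a_1 > a_2 > ... > a_m on the sets A_1, ..., A_m partitioning V. Then ρ ∈ B maximizes ρ^T x over B if and only if ρ(A_1 ∪ ... ∪ A_i) = w(A_1 ∪ ... ∪ A_i) for all i = 1, ..., m. -/
/-!
If `ρ` is tight (`ρ(S) = w(S)`) on every superlevel set `{x ≥ t}`, write `x` as a nonnegative
combination of the indicators of its superlevel sets plus a constant (Abel summation); since every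
`ρ'` in the base polytope satisfies `ρ'(S) ≤ w(S) = ρ(S)` on these sets and `ρ'(V) = ρ(V)`, this
gives `ρ'ᵀx ≤ ρᵀx`.

Conversely, if `ρ` is a maximizer and `x v < x u`, some tight set contains `u` but not `v`:
otherwise moving a small mass from `v` to `u` stays in the base polytope and increases `ρᵀx`.
By submodularity, tight sets are closed under unions and intersections, so each superlevel set
`L`, being the union over `u ∈ L` of the intersections over `v ∉ L` of such sets, is tight.
-/

open Finset Filter Topology

theorem sum_mul_nonneg_of_sum_superlevel_nonneg {ι : Type*} [Fintype ι] (g x : ι → ℝ)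
    (hg : ∑ i, g i = 0) (hlev : ∀ t, 0 ≤ ∑ i with t ≤ x i, g i) :
    0 ≤ ∑ i, g i * x i := by
  suffices key : ∀ T : Finset ℝ, ∀ x : ι → ℝ, (∀ i, x i ∈ T) →
      (∀ t, 0 ≤ ∑ i with t ≤ x i, g i) → 0 ≤ ∑ i, g i * x i from
    key (univ.image x) x (fun i => mem_image_of_mem x (mem_univ i)) hlev
  intro T
  induction T using Finset.induction_on_max with
  | empty => exact fun x hx _ => (sum_eq_zero fun i _ => (notMem_empty _ (hx i)).elim).ge
  | insert M T hlt ih =>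
    intro x hx hlev
    rcases T.eq_empty_or_nonempty with rfl | hT
    · have hxM : ∀ i, x i = M := fun i => by simpa using hx i
      simp [hxM, ← sum_mul, hg]
    -- lower the top value `M` of `x` to the next value `s`
    set s := T.max' hT
    have hsM : s < M := hlt s (max'_mem T hT)
    have hlower : ∑ i, g i * x i =
        ∑ i, g i * min (x i) s + (M - s) * ∑ i with M ≤ x i, g i := by
      rw [sum_filter, mul_sum, ← sum_add_distrib]
      refine sum_congr rfl fun i _ => ?_
      rcases mem_insert.1 (hx i) with h | h
      · rw [h, min_eq_right hsM.le, if_pos le_rfl]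
        ring
      · have hxs : x i ≤ s := le_max' T _ h
        rw [min_eq_left hxs, if_neg (not_le.2 (hxs.trans_lt hsM)), mul_zero, add_zero]
    have hvalues : ∀ i, min (x i) s ∈ T := fun i => by
      rcases mem_insert.1 (hx i) with h | h
      · simpa [h, min_eq_right hsM.le] using max'_mem T hT
      · rwa [min_eq_left (le_max' T _ h)]
    have hlev' : ∀ t, 0 ≤ ∑ i with t ≤ min (x i) s, g i := fun t => by
      by_cases hts : t ≤ s
      · simpa only [le_min_iff, hts, and_true] using hlev t
      · simp [hts]
    rw [hlower]
    exact add_nonneg (ih _ hvalues hlev') (mul_nonneg (sub_nonneg.2 hsM.le) (hlev M))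

section BasePolytope

variable {V : Type*}

section Tight

variable [DecidableEq V] {w : Finset V → ℝ} {ρ : V → ℝ}

theorem tight_union_and_tight_inter
    (hsub : ∀ A B : Finset V, w (A ∪ B) + w (A ∩ B) ≤ w A + w B)
    (hρ : ∀ S : Finset V, ∑ v ∈ S, ρ v ≤ w S) {S T : Finset V}
    (hS : ∑ v ∈ S, ρ v = w S) (hT : ∑ v ∈ T, ρ v = w T) :
    ∑ v ∈ S ∪ T, ρ v = w (S ∪ T) ∧ ∑ v ∈ S ∩ T, ρ v = w (S ∩ T) := by
  have := sum_union_inter (s₁ := S) (s₂ := T) (f := ρ)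
  constructor <;> linarith [hρ (S ∪ T), hρ (S ∩ T), hsub S T]

theorem tight_sup (hsub : ∀ A B : Finset V, w (A ∪ B) + w (A ∩ B) ≤ w A + w B)
    (hρ : ∀ S : Finset V, ∑ v ∈ S, ρ v ≤ w S) (h0 : w ∅ = 0) {ι : Type*} {s : Finset ι}
    {f : ι → Finset V} (hf : ∀ i ∈ s, ∑ v ∈ f i, ρ v = w (f i)) :
    ∑ v ∈ s.sup f, ρ v = w (s.sup f) :=
  sup_induction (p := fun S => ∑ v ∈ S, ρ v = w S) (by simp [h0])
    (fun _ hS _ hT => (tight_union_and_tight_inter hsub hρ hS hT).1) hf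

theorem tight_inf [Fintype V] (hsub : ∀ A B : Finset V, w (A ∪ B) + w (A ∩ B) ≤ w A + w B)
    (hρ : ∀ S : Finset V, ∑ v ∈ S, ρ v ≤ w S) (hV : ∑ v, ρ v = w univ) {ι : Type*}
    {s : Finset ι} {f : ι → Finset V} (hf : ∀ i ∈ s, ∑ v ∈ f i, ρ v = w (f i)) :
    ∑ v ∈ s.inf f, ρ v = w (s.inf f) :=
  inf_induction (p := fun S => ∑ v ∈ S, ρ v = w S) (by simpa using hV)
    (fun _ hS _ hT => (tight_union_and_tight_inter hsub hρ hS hT).2) hf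

end Tight

variable [Fintype V] {w : Finset V → ℝ} {ρ x : V → ℝ}

def basePolytope (w : Finset V → ℝ) : Set (V → ℝ) :=
  {ρ | (∀ S, ∑ v ∈ S, ρ v ≤ w S) ∧ ∑ v, ρ v = w univ}

theorem isMaxOn_of_tight_superlevel (hV : ∑ v, ρ v = w univ)
    (htight : ∀ t, ∑ v with t ≤ x v, ρ v = w {v | t ≤ x v}) :
    IsMaxOn (fun ρ' => ∑ v, ρ' v * x v) (basePolytope w) ρ := by
  intro ρ' hρ'
  have hgap := sum_mul_nonneg_of_sum_superlevel_nonneg (ρ - ρ') x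
    (by simp [sum_sub_distrib, hV, hρ'.2]) (fun t => by simp [sum_sub_distrib, htight t, hρ'.1])
  simpa [sub_mul, sum_sub_distrib] using hgap

theorem forall_tight_superlevel_iff_of_range_eq (h0 : w ∅ = 0) {ι : Type*} {a : ι → ℝ}
    (hrange : Set.range x = Set.range a) :
    (∀ t, ∑ v with t ≤ x v, ρ v = w {v | t ≤ x v}) ↔
      ∀ i, ∑ v with a i ≤ x v, ρ v = w {v | a i ≤ x v} := by
  refine ⟨fun h i => h (a i), fun h t => ?_⟩
  rcases ({v | t ≤ x v} : Finset V).eq_empty_or_nonempty with hL | hL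
  · rw [hL, sum_empty, h0]
  -- a nonempty superlevel set is the superlevel set at the least value of `x` it contains
  obtain ⟨u, hu, hmin⟩ := exists_min_image _ x hL
  obtain ⟨i, hi⟩ : x u ∈ Set.range a := hrange ▸ Set.mem_range_self u
  have hLu : ({v | t ≤ x v} : Finset V) = ({v | a i ≤ x v} : Finset V) := by
    ext v
    simp only [mem_filter, mem_univ, true_and] at hu hmin ⊢
    exact ⟨fun hv => hi ▸ hmin v hv, fun hv => hu.trans (hi ▸ hv)⟩
  rw [hLu]
  exact h i

variable [DecidableEq V]

theorem add_single_sub_single_mem_basePolytope (hρ : ρ ∈ basePolytope w) {u v : V} {ε : ℝ}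
    (hε : 0 ≤ ε) (hgap : ∀ S : Finset V, u ∈ S → v ∉ S → ε ≤ w S - ∑ t ∈ S, ρ t) :
    (ρ + Pi.single u ε - Pi.single v ε : V → ℝ) ∈ basePolytope w := by
  have hsum : ∀ S : Finset V, ∑ t ∈ S, (ρ + Pi.single u ε - Pi.single v ε : V → ℝ) t =
      ∑ t ∈ S, ρ t + (if u ∈ S then ε else 0) - if v ∈ S then ε else 0 := by
    intro S
    simp only [Pi.add_apply, Pi.sub_apply, sum_add_distrib, sum_sub_distrib, sum_pi_single']
  refine ⟨fun S => ?_, by rw [hsum]; simp [hρ.2]⟩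
  have := hρ.1 S
  rw [hsum]
  by_cases hu : u ∈ S <;> by_cases hv : v ∈ S <;> simp only [hu, hv, if_true, if_false]
  · linarith
  · linarith [hgap S hu hv]
  · linarith
  · linarith

theorem exists_tight_mem_notMem_of_isMaxOn (hρ : ρ ∈ basePolytope w)
    (hmax : IsMaxOn (fun ρ' => ∑ v, ρ' v * x v) (basePolytope w) ρ) {u v : V} (huv : x v < x u) :
    ∃ S : Finset V, ∑ t ∈ S, ρ t = w S ∧ u ∈ S ∧ v ∉ S := by
  by_contra! hslack
  have hε : ∀ᶠ ε in 𝓝[>] (0 : ℝ), ∀ S : Finset V, u ∈ S → v ∉ S → ε ≤ w S - ∑ t ∈ S, ρ t := by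
    refine eventually_all.2 fun S => ?_
    by_cases hS : u ∈ S ∧ v ∉ S
    · have hgap : 0 < w S - ∑ t ∈ S, ρ t :=
        sub_pos.2 ((hρ.1 S).lt_of_ne fun h => hS.2 (hslack S h hS.1))
      exact nhdsWithin_le_nhds ((eventually_le_nhds hgap).mono fun ε hε _ _ => hε)
    · exact Eventually.of_forall fun ε hu hv => absurd ⟨hu, hv⟩ hS
  obtain ⟨ε, hεgap, hεpos⟩ := (hε.and self_mem_nhdsWithin).exists
  have hle : ∑ t, (ρ + Pi.single u ε - Pi.single v ε : V → ℝ) t * x t ≤ ∑ t, ρ t * x t :=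
    hmax (add_single_sub_single_mem_basePolytope hρ hεpos.le hεgap)
  have hobj : ∑ t, (ρ + Pi.single u ε - Pi.single v ε : V → ℝ) t * x t =
      ∑ t, ρ t * x t + ε * (x u - x v) := by
    simp only [Pi.add_apply, Pi.sub_apply, add_mul, sub_mul, sum_add_distrib, sum_sub_distrib,
      Pi.single_apply, ite_mul, zero_mul, sum_ite_eq', mem_univ, if_true]
    ring
  nlinarith [mul_pos hεpos (sub_pos.2 huv)]

theorem tight_superlevel_of_isMaxOn (hsub : ∀ A B : Finset V, w (A ∪ B) + w (A ∩ B) ≤ w A + w B)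
    (h0 : w ∅ = 0) (hρ : ρ ∈ basePolytope w)
    (hmax : IsMaxOn (fun ρ' => ∑ v, ρ' v * x v) (basePolytope w) ρ) (t : ℝ) :
    ∑ v with t ≤ x v, ρ v = w {v | t ≤ x v} := by
  set L : Finset V := {v | t ≤ x v}
  have hsep : ∀ u ∈ L, ∀ v ∈ Lᶜ, ∃ S : Finset V, ∑ t ∈ S, ρ t = w S ∧ u ∈ S ∧ v ∉ S :=
    fun u hu v hv => exists_tight_mem_notMem_of_isMaxOn hρ hmax <| by
      simp only [L, mem_compl, mem_filter, mem_univ, true_and, not_le] at hu hv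
      linarith
  choose! S hS using hsep
  have hL : L = L.sup fun u => Lᶜ.inf (S u) := by
    ext y
    simp only [Finset.mem_sup, Finset.mem_inf]
    refine ⟨fun hy => ⟨y, hy, fun v hv => (hS y hy v hv).2.1⟩, fun ⟨u, hu, hy⟩ => ?_⟩
    by_contra hyL
    exact (hS u hu y (mem_compl.2 hyL)).2.2 (hy y (mem_compl.2 hyL))
  rw [hL]
  exact tight_sup hsub hρ.1 h0 fun u hu => tight_inf hsub hρ.1 hρ.2 fun v hv => (hS u hu v hv).1

theorem isMaxOn_iff_tight_superlevel (hsub : ∀ A B : Finset V, w (A ∪ B) + w (A ∩ B) ≤ w A + w B)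
    (h0 : w ∅ = 0) (hρ : ρ ∈ basePolytope w) :
    IsMaxOn (fun ρ' => ∑ v, ρ' v * x v) (basePolytope w) ρ ↔
      ∀ t, ∑ v with t ≤ x v, ρ v = w {v | t ≤ x v} :=
  ⟨tight_superlevel_of_isMaxOn hsub h0 hρ, isMaxOn_of_tight_superlevel hρ.2⟩

end BasePolytope

/-- Characterization of maximizers of the support function of a base polytope
(Proposition 4.2 in Bach): `ρ ∈ B` maximizes `ρᵀx` iff it is tight on every
prefix `A_1 ∪ ⋯ ∪ A_i` of the decreasing level-set partition of `x`. -/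
theorem stmt3 {V : Type*} [Fintype V] [DecidableEq V] (w : Finset V → ℝ)
    (hsub : ∀ A B : Finset V, w (A ∪ B) + w (A ∩ B) ≤ w A + w B) (h0 : w ∅ = 0)
    (x : V → ℝ) (m : ℕ) (a : Fin m → ℝ) (A : Fin m → Finset V)
    (ha : StrictAnti a)
    (hne : ∀ i, (A i).Nonempty)
    (hpart : ∀ v : V, ∃! i, v ∈ A i)
    (hx : ∀ i, ∀ v ∈ A i, x v = a i)
    (ρ : V → ℝ) (hρ : ∀ S : Finset V, ∑ v ∈ S, ρ v ≤ w S)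
    (hρV : ∑ v, ρ v = w Finset.univ) :
    ((∀ ρ' : V → ℝ, (∀ S : Finset V, ∑ v ∈ S, ρ' v ≤ w S) →
        (∑ v, ρ' v = w Finset.univ) →
        ∑ v, ρ' v * x v ≤ ∑ v, ρ v * x v)
      ↔ ∀ i : Fin m,
          ∑ v ∈ (Finset.univ.filter (· ≤ i)).biUnion A, ρ v =
            w ((Finset.univ.filter (· ≤ i)).biUnion A)) := by
  have hprefix : ∀ i, (univ.filter (· ≤ i)).biUnion A = ({v | a i ≤ x v} : Finset V) := by
    intro i
    ext v
    simp only [mem_biUnion, mem_filter, mem_univ, true_and]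
    constructor
    · rintro ⟨j, hji, hv⟩
      exact hx j v hv ▸ ha.antitone hji
    · intro hv
      obtain ⟨j, hj, -⟩ := hpart v
      exact ⟨j, ha.le_iff_ge.1 (hx j v hj ▸ hv), hj⟩
  have hrange : Set.range x = Set.range a := by
    ext r
    constructor
    · rintro ⟨v, rfl⟩
      obtain ⟨i, hi, -⟩ := hpart v
      exact ⟨i, (hx i v hi).symm⟩
    · rintro ⟨i, rfl⟩
      obtain ⟨v, hv⟩ := hne i
      exact ⟨v, hx i v hv⟩
  simp only [hprefix]
  rw [← forall_tight_superlevel_iff_of_range_eq h0 hrange,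
    ← isMaxOn_iff_tight_superlevel hsub h0 ⟨hρ, hρV⟩]
  exact ⟨fun h ρ' hρ' => h ρ' hρ'.1 hρ'.2, fun h ρ' hρ' hρ'V => h ⟨hρ', hρ'V⟩⟩
end

section
/- Consider the problem of minimizing ∑_{e ∈ E_v} ϑ_e |ξ_e − r_e|^p over ξ ∈ R^{E_v} subject to Δ_v − ∑_{e ∈ E_v} ϑ_e ξ_e ≤ d_v, where p ≥ 2, ϑ_e > 0, d_v = ∑_{e∈E_v} ϑ_e. The optimal solution is ξ_e* = r_e + d_v^{−1} · max(Δ_v − ∑_{e'∈E_v} ϑ_{e'} r_{e'} − d_v, 0) for every e ∈ E_v. -/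
/-! Spreading the required excess `c = [Δ - ∑ ϑ r - d]₊` uniformly over all coordinates is
feasible, and it is optimal because every feasible point must have weighted deviation
`∑ ϑ_e |ξ_e - r_e| ≥ c`, while for `p ≥ 1` Jensen's inequality for `t ↦ t^p` bounds the cost of
any such deviation below by the cost `d (c / d)^p` of the uniform one. -/

open Finset

theorem mul_rpow_div_le_sum_mul_rpow {ι : Type*} (s : Finset ι) (w x : ι → ℝ)
    (hw : ∀ i ∈ s, 0 ≤ w i) (hW : 0 < ∑ i ∈ s, w i) (hx : ∀ i ∈ s, 0 ≤ x i)
    {c p : ℝ} (hc : 0 ≤ c) (hcx : c ≤ ∑ i ∈ s, w i * x i) (hp : 1 ≤ p) :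
    (∑ i ∈ s, w i) * (c / ∑ i ∈ s, w i) ^ p ≤ ∑ i ∈ s, w i * x i ^ p := by
  set W := ∑ i ∈ s, w i
  have hmean : c / W ≤ ∑ i ∈ s, w i / W * x i := by
    simp_rw [div_mul_eq_mul_div, ← sum_div]
    gcongr
  have hjensen := Real.rpow_arith_mean_le_arith_mean_rpow s (fun i => w i / W) x
    (fun i hi => div_nonneg (hw i hi) hW.le) (by rw [← sum_div, div_self hW.ne']) hx hp
  calc W * (c / W) ^ p ≤ W * ∑ i ∈ s, w i / W * x i ^ p := by
        gcongr
        exact (Real.rpow_le_rpow (div_nonneg hc hW.le) hmean (by linarith)).trans hjensen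
    _ = ∑ i ∈ s, w i * x i ^ p := by
        rw [mul_sum]
        exact sum_congr rfl fun i _ => by field_simp

theorem le_sum_mul_abs_sub_of_le_sum_mul {ι : Type*} (s : Finset ι) (w r y : ι → ℝ)
    (hw : ∀ i ∈ s, 0 ≤ w i) {a : ℝ} (hy : a ≤ ∑ i ∈ s, w i * y i) :
    max (a - ∑ i ∈ s, w i * r i) 0 ≤ ∑ i ∈ s, w i * |y i - r i| := by
  have hdev : ∑ i ∈ s, w i * y i - ∑ i ∈ s, w i * r i ≤ ∑ i ∈ s, w i * |y i - r i| := by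
    rw [← sum_sub_distrib]
    exact sum_le_sum fun i hi => by
      rw [← mul_sub]; exact mul_le_mul_of_nonneg_left (le_abs_self _) (hw i hi)
  exact max_le (by linarith) (sum_nonneg fun i hi => mul_nonneg (hw i hi) (abs_nonneg _))

/-- Closed-form solution of the per-node `s`-subproblem: the minimizer of
`∑_e ϑ_e |ξ_e − r_e|^p` subject to `Δ − ∑_e ϑ_e ξ_e ≤ d` (with `d = ∑_e ϑ_e`)
is `ξ_e = r_e + d⁻¹ [Δ − ∑ ϑ r − d]₊`. -/
theorem stmt7 {E : Type*} [Fintype E] [Nonempty E]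
    (ϑ r : E → ℝ) (hϑ : ∀ e, 0 < ϑ e) (Δ dv : ℝ)
    (hd : dv = ∑ e, ϑ e) (p : ℝ) (hp : 2 ≤ p)
    (ξ : E → ℝ)
    (hξ : ξ = fun e => r e + dv⁻¹ * max (Δ - (∑ e', ϑ e' * r e') - dv) 0) :
    (Δ - ∑ e, ϑ e * ξ e ≤ dv) ∧
    ∀ ξ' : E → ℝ, (Δ - ∑ e, ϑ e * ξ' e ≤ dv) →
      ∑ e, ϑ e * |ξ e - r e| ^ p ≤ ∑ e, ϑ e * |ξ' e - r e| ^ p := by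
  have hdv : 0 < dv := hd ▸ sum_pos (fun e _ => hϑ e) univ_nonempty
  set c := max (Δ - dv - ∑ e, ϑ e * r e) 0 with hc
  have hc0 : 0 ≤ c := le_max_right _ _
  have hdev : ∀ e, ξ e - r e = c / dv := fun e => by
    rw [hξ, hc, sub_right_comm]; ring
  have hsum : ∑ e, ϑ e * ξ e - ∑ e, ϑ e * r e = c := by
    simp_rw [← sum_sub_distrib, ← mul_sub, hdev, ← sum_mul, ← hd]
    field_simp
  have hcost : ∑ e, ϑ e * |ξ e - r e| ^ p = dv * (c / dv) ^ p := by
    simp_rw [hdev, abs_of_nonneg (div_nonneg hc0 hdv.le), ← sum_mul, ← hd]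
  refine ⟨by linarith [le_max_left (Δ - dv - ∑ e, ϑ e * r e) 0], fun ξ' hfeas => ?_⟩
  rw [hcost, hd]
  exact mul_rpow_div_le_sum_mul_rpow univ ϑ (fun e => |ξ' e - r e|) (fun e _ => (hϑ e).le)
    (hd ▸ hdv) (fun e _ => abs_nonneg _) hc0
    (le_sum_mul_abs_sub_of_le_sum_mul univ ϑ r ξ' (fun e _ => (hϑ e).le) (by linarith))
    (by linarith)
end

section
/- Projection structure for unit cut-cost: consider min over (φ, r) with φ ≥ 0 and r ∈ φ·B of (1/2)φ² + (1/(2σ))‖s − r‖₂², where B is the base polytope of the unit cut-cost on a finite set e (w(S) = 1 for ∅ ≠ S ⊊ e, w(∅) = w(e) = 0). At the unique optimum, there exist thresholds a ≥ b such that r_v = s_v − σa for v with s_v ≥ σa, r_v = s_v − σb for v with s_v ≤ σb, and r_v = 0 otherwise; moreover ∑_v r_v = 0. -/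
/-!
For the unit cut-cost, `r ∈ φ • B` just says `∑ r = 0` and `∑ max r 0 ≤ φ`, so the problem is a
least-squares problem under a budget on the positive part. Moving mass `ε` from one coordinate
to another keeps `∑ r = 0`, and whenever this stays within the budget (with `φ` shifted by `t ε`),
minimality forces the first-order change `t φ + ((s - r) v - (s - r) u) / σ` to be nonnegative.
Hence `s - r` is constant, say `σ a`, where `r > 0`, constant, say `σ b`, where `r < 0`, and lies
in `[σ b, σ a]` where `r = 0`; comparing a positive with a negative coordinate gives `b ≤ a`.
-/

open Filter Topology

lemma nonneg_of_forall_mul_add_mul_sq_nonneg {a c ε₀ : ℝ} (hε₀ : 0 < ε₀)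
    (h : ∀ ε, 0 < ε → ε ≤ ε₀ → 0 ≤ a * ε + c * ε ^ 2) : 0 ≤ a := by
  have hlim : Tendsto (fun ε => a + c * ε) (𝓝[>] 0) (𝓝 a) := by
    have : Tendsto (fun ε => a + c * ε) (𝓝 0) (𝓝 (a + c * 0)) :=
      (continuous_const.add (continuous_const.mul continuous_id)).tendsto 0
    simpa using this.mono_left nhdsWithin_le_nhds
  refine ge_of_tendsto hlim ?_
  filter_upwards [Ioc_mem_nhdsGT hε₀] with ε ⟨hε, hεle⟩
  have hfactor : a * ε + c * ε ^ 2 = ε * (a + c * ε) := by ring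
  exact nonneg_of_mul_nonneg_right (hfactor ▸ h ε hε hεle) hε

section PositivePart

variable {α : Type*} [Fintype α]

lemma sum_max_zero_le_of_forall_sum_le {ρ : α → ℝ} {c : ℝ}
    (h : ∀ S : Finset α, ∑ v ∈ S, ρ v ≤ c) : ∑ v, max (ρ v) 0 ≤ c := by
  classical
  calc ∑ v, max (ρ v) 0 = ∑ v ∈ Finset.univ.filter (fun v => 0 ≤ ρ v), ρ v := by
        rw [Finset.sum_filter]
        refine Finset.sum_congr rfl fun v _ => ?_
        split_ifs with hv
        · exact max_eq_left hv
        · exact max_eq_right (le_of_not_ge hv)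
    _ ≤ c := h _

lemma sum_le_sum_max_zero (f : α → ℝ) (S : Finset α) : ∑ v ∈ S, f v ≤ ∑ v, max (f v) 0 :=
  calc ∑ v ∈ S, f v ≤ ∑ v ∈ S, max (f v) 0 := Finset.sum_le_sum fun _ _ => le_max_left _ _
    _ ≤ ∑ v, max (f v) 0 :=
      Finset.sum_le_sum_of_subset_of_nonneg (Finset.subset_univ S) fun _ _ _ => le_max_right _ _

end PositivePart

section UnitCutCost

variable {α : Type*} [Fintype α] [DecidableEq α] {w : Finset α → ℝ}

lemma sum_max_zero_le_of_mem_smul_base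
    (hw : ∀ S : Finset α, w S = if S = ∅ ∨ S = Finset.univ then 0 else 1)
    {φ : ℝ} (hφ : 0 ≤ φ) {ρ : α → ℝ} (hρ : ∀ S : Finset α, ∑ v ∈ S, ρ v ≤ w S) :
    ∑ v, max ((φ • ρ) v) 0 ≤ φ := by
  have hw_le : ∀ S, w S ≤ 1 := fun S => by rw [hw S]; split_ifs <;> norm_num
  have hρ_le : ∑ v, max (ρ v) 0 ≤ 1 :=
    sum_max_zero_le_of_forall_sum_le fun S => (hρ S).trans (hw_le S)
  calc ∑ v, max ((φ • ρ) v) 0 = φ * ∑ v, max (ρ v) 0 := by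
        simp only [Pi.smul_apply, smul_eq_mul, Finset.mul_sum, mul_max_of_nonneg _ _ hφ, mul_zero]
    _ ≤ φ * 1 := mul_le_mul_of_nonneg_left hρ_le hφ
    _ = φ := mul_one φ

lemma inv_smul_mem_base
    (hw : ∀ S : Finset α, w S = if S = ∅ ∨ S = Finset.univ then 0 else 1)
    {φ : ℝ} (hφ : 0 < φ) {r : α → ℝ} (hsum : ∑ v, r v = 0) (hpos : ∑ v, max (r v) 0 ≤ φ)
    (S : Finset α) : ∑ v ∈ S, (φ⁻¹ • r) v ≤ w S := by
  simp only [Pi.smul_apply, smul_eq_mul, ← Finset.mul_sum]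
  rw [hw S]
  split_ifs with hS
  · rcases hS with rfl | rfl
    · simp
    · rw [hsum, mul_zero]
  · rw [inv_mul_le_iff₀ hφ, mul_one]
    exact (sum_le_sum_max_zero r S).trans hpos

end UnitCutCost

section Transfer

variable {α : Type*} [Fintype α] [DecidableEq α]

def transfer (r : α → ℝ) (u v : α) (ε : ℝ) : α → ℝ :=
  Function.update (Function.update r u (r u + ε)) v (r v - ε)

lemma sum_comp_transfer_sub_sum (F : α → ℝ → ℝ) (r : α → ℝ) {u v : α} (huv : u ≠ v) (ε : ℝ) :
    ∑ x, F x (transfer r u v ε x) - ∑ x, F x (r x)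
      = (F u (r u + ε) - F u (r u)) + (F v (r v - ε) - F v (r v)) := by
  rw [← Finset.sum_sub_distrib, Fintype.sum_eq_add u v huv]
  · simp [transfer, huv]
  · rintro x ⟨hxu, hxv⟩
    simp [transfer, hxu, hxv]

lemma sum_transfer (r : α → ℝ) {u v : α} (huv : u ≠ v) (ε : ℝ) :
    ∑ x, transfer r u v ε x = ∑ x, r x := by
  linarith [sum_comp_transfer_sub_sum (fun _ y => y) r huv ε]

lemma sum_max_zero_transfer (r : α → ℝ) {u v : α} (huv : u ≠ v) (ε : ℝ) :
    ∑ x, max (transfer r u v ε x) 0 = ∑ x, max (r x) 0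
      + (max (r u + ε) 0 - max (r u) 0) + (max (r v - ε) 0 - max (r v) 0) := by
  linarith [sum_comp_transfer_sub_sum (fun _ y => max y 0) r huv ε]

end Transfer

section BudgetProblem

variable {α : Type*} [Fintype α]

noncomputable def projObjective (σ : ℝ) (s : α → ℝ) (φ : ℝ) (r : α → ℝ) : ℝ :=
  1 / 2 * φ ^ 2 + 1 / (2 * σ) * ∑ v, (s v - r v) ^ 2

lemma projObjective_transfer_sub [DecidableEq α] {σ φ : ℝ} {s r : α → ℝ} (hσ : σ ≠ 0)
    {u v : α} (huv : u ≠ v) (t ε : ℝ) :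
    projObjective σ s (φ + t * ε) (transfer r u v ε) - projObjective σ s φ r
      = (t * φ + ((s v - r v) - (s u - r u)) / σ) * ε + (t ^ 2 / 2 + 1 / σ) * ε ^ 2 := by
  have hsq : ∑ x, (s x - transfer r u v ε x) ^ 2 = ∑ x, (s x - r x) ^ 2
      + ((s u - (r u + ε)) ^ 2 - (s u - r u) ^ 2) + ((s v - (r v - ε)) ^ 2 - (s v - r v) ^ 2) := by
    linarith [sum_comp_transfer_sub_sum (fun x y => (s x - y) ^ 2) r huv ε]
  simp only [projObjective]
  rw [hsq]
  field_simp
  ring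

/-- Optimality in the reformulation of the projection problem where `r ∈ φ • B` is replaced by
the budget constraint on the positive part of `r`. -/
structure IsBudgetOptimal (σ : ℝ) (s : α → ℝ) (φ : ℝ) (r : α → ℝ) : Prop where
  sum_eq_zero : ∑ v, r v = 0
  sum_max_zero_le : ∑ v, max (r v) 0 ≤ φ
  le_of_feasible : ∀ (φ' : ℝ) (r' : α → ℝ), 0 < φ' → ∑ v, r' v = 0 →
    ∑ v, max (r' v) 0 ≤ φ' → projObjective σ s φ r ≤ projObjective σ s φ' r'

namespace IsBudgetOptimal

variable {σ φ : ℝ} {s r : α → ℝ}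

lemma apply_le (h : IsBudgetOptimal σ s φ r) (u : α) : r u ≤ φ :=
  (le_max_left _ _).trans <|
    (Finset.single_le_sum (fun x _ => le_max_right (r x) 0) (Finset.mem_univ u)).trans
      h.sum_max_zero_le

lemma pos_of_pos (h : IsBudgetOptimal σ s φ r) {u : α} (hu : 0 < r u) : 0 < φ :=
  hu.trans_le (h.apply_le u)

variable [DecidableEq α]

lemma sub_le_of_transfer_feasible (h : IsBudgetOptimal σ s φ r) (hσ : 0 < σ) {u v : α}
    (huv : u ≠ v) {t ε₀ : ℝ} (hε₀ : 0 < ε₀)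
    (hfeas : ∀ ε, 0 < ε → ε ≤ ε₀ →
      0 < φ + t * ε ∧ ∑ x, max (transfer r u v ε x) 0 ≤ φ + t * ε) :
    (s u - r u) - (s v - r v) ≤ σ * t * φ := by
  have hfirst : 0 ≤ t * φ + ((s v - r v) - (s u - r u)) / σ := by
    refine nonneg_of_forall_mul_add_mul_sq_nonneg (c := t ^ 2 / 2 + 1 / σ) hε₀ fun ε hε hεle => ?_
    obtain ⟨hφ', hbudget⟩ := hfeas ε hε hεle
    have hsum : ∑ x, transfer r u v ε x = 0 := (sum_transfer r huv ε).trans h.sum_eq_zero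
    rw [← projObjective_transfer_sub hσ.ne' huv]
    exact sub_nonneg.2 (h.le_of_feasible _ _ hφ' hsum hbudget)
  have := mul_nonneg hσ.le hfirst
  rw [mul_add, mul_div_cancel₀ _ hσ.ne'] at this
  linarith

lemma sub_le_sub_of_neg_of_nonpos (h : IsBudgetOptimal σ s φ r) (hσ : 0 < σ) (hφ : 0 < φ)
    {u v : α} (hu : r u < 0) (hv : r v ≤ 0) : s u - r u ≤ s v - r v := by
  rcases eq_or_ne u v with rfl | huv
  · exact le_rfl
  have := h.sub_le_of_transfer_feasible hσ huv (t := 0) (neg_pos.2 hu) fun ε hε hεle => by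
    refine ⟨by simpa using hφ, ?_⟩
    rw [sum_max_zero_transfer r huv, max_eq_right (by linarith : r u + ε ≤ 0),
      max_eq_right (by linarith : r v - ε ≤ 0), max_eq_right hu.le, max_eq_right hv]
    simpa using h.sum_max_zero_le
  simpa using this

lemma sub_le_sub_of_nonneg_of_pos (h : IsBudgetOptimal σ s φ r) (hσ : 0 < σ) (hφ : 0 < φ)
    {u v : α} (hu : 0 ≤ r u) (hv : 0 < r v) : s u - r u ≤ s v - r v := by
  rcases eq_or_ne u v with rfl | huv
  · exact le_rfl
  have := h.sub_le_of_transfer_feasible hσ huv (t := 0) hv fun ε hε hεle => by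
    refine ⟨by simpa using hφ, ?_⟩
    rw [sum_max_zero_transfer r huv, max_eq_left (by linarith : 0 ≤ r u + ε),
      max_eq_left (by linarith : 0 ≤ r v - ε), max_eq_left hu, max_eq_left hv.le]
    linarith [h.sum_max_zero_le]
  simpa using this

lemma sub_le_sub_of_neg_of_pos (h : IsBudgetOptimal σ s φ r) (hσ : 0 < σ) {u v : α}
    (hu : r u < 0) (hv : 0 < r v) : s u - r u ≤ s v - r v := by
  have huv : u ≠ v := fun huv => by rw [huv] at hu; linarith
  have hrv_le := h.apply_le v
  have := h.sub_le_of_transfer_feasible hσ huv (t := -1)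
    (lt_min (neg_pos.2 hu) (half_pos hv)) fun ε hε hεle => by
    have hε₁ : ε ≤ -r u := hεle.trans (min_le_left _ _)
    have hε₂ : ε ≤ r v / 2 := hεle.trans (min_le_right _ _)
    refine ⟨by linarith, ?_⟩
    rw [sum_max_zero_transfer r huv, max_eq_right (by linarith : r u + ε ≤ 0),
      max_eq_left (by linarith : 0 ≤ r v - ε), max_eq_right hu.le, max_eq_left hv.le]
    linarith [h.sum_max_zero_le]
  linarith [mul_nonneg hσ.le (h.pos_of_pos hv).le]

lemma exists_thresholds (h : IsBudgetOptimal σ s φ r) (hσ : 0 < σ) :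
    ∃ A B : ℝ, B ≤ A ∧ ∀ v, B ≤ s v - r v ∧ s v - r v ≤ A ∧
      (0 < r v → s v - r v = A) ∧ (r v < 0 → s v - r v = B) := by
  by_cases hpos : ∃ u, 0 < r u
  · obtain ⟨u₀, hu₀⟩ := hpos
    obtain ⟨v₀, hv₀⟩ : ∃ v, r v < 0 := by
      by_contra! hnonneg
      have := (Finset.sum_eq_zero_iff_of_nonneg fun x _ => hnonneg x).1 h.sum_eq_zero u₀
        (Finset.mem_univ _)
      linarith
    have hφ := h.pos_of_pos hu₀
    refine ⟨s u₀ - r u₀, s v₀ - r v₀, h.sub_le_sub_of_neg_of_pos hσ hv₀ hu₀, fun v => ?_⟩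
    rcases lt_trichotomy (r v) 0 with hv | hv | hv
    · have hB := le_antisymm (h.sub_le_sub_of_neg_of_nonpos hσ hφ hv hv₀.le)
        (h.sub_le_sub_of_neg_of_nonpos hσ hφ hv₀ hv.le)
      exact ⟨hB.ge, h.sub_le_sub_of_neg_of_pos hσ hv hu₀, fun hv' => by linarith,
        fun _ => hB⟩
    · exact ⟨h.sub_le_sub_of_neg_of_nonpos hσ hφ hv₀ hv.le,
        h.sub_le_sub_of_nonneg_of_pos hσ hφ hv.ge hu₀, fun hv' => by linarith,
        fun hv' => by linarith⟩
    · have hA := le_antisymm (h.sub_le_sub_of_nonneg_of_pos hσ hφ hv.le hu₀)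
        (h.sub_le_sub_of_nonneg_of_pos hσ hφ hu₀.le hv)
      exact ⟨h.sub_le_sub_of_neg_of_pos hσ hv₀ hv, hA.le, fun _ => hA,
        fun hv' => by linarith⟩
  · push Not at hpos
    have hr : ∀ v, r v = 0 := fun v =>
      (Finset.sum_eq_zero_iff_of_nonpos fun x _ => hpos x).1 h.sum_eq_zero v (Finset.mem_univ _)
    have habs : ∀ v, |s v| ≤ ∑ x, |s x| := fun v =>
      Finset.single_le_sum (fun x _ => abs_nonneg (s x)) (Finset.mem_univ v)
    refine ⟨∑ x, |s x|, -∑ x, |s x|,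
      neg_le_self (Finset.sum_nonneg fun x _ => abs_nonneg (s x)), fun v => ?_⟩
    simp only [hr, sub_zero, lt_irrefl, IsEmpty.forall_iff, and_true]
    exact ⟨neg_le_of_abs_le (habs v), (le_abs_self _).trans (habs v)⟩

end IsBudgetOptimal

end BudgetProblem

lemma threshold_trichotomy {A B s r : ℝ} (hB : B ≤ s - r) (hA : s - r ≤ A)
    (hpos : 0 < r → s - r = A) (hneg : r < 0 → s - r = B) :
    (A ≤ s → r = s - A) ∧ (s ≤ B → r = s - B) ∧ (B < s → s < A → r = 0) := by
  rcases lt_trichotomy r 0 with hr | hr | hr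
  · have := hneg hr
    exact ⟨fun _ => by linarith, fun _ => by linarith, fun _ _ => by linarith⟩
  · exact ⟨fun _ => by linarith, fun _ => by linarith, fun _ _ => hr⟩
  · have := hpos hr
    exact ⟨fun _ => by linarith, fun _ => by linarith, fun _ _ => by linarith⟩

theorem stmt16_general {α : Type*} [Fintype α] [DecidableEq α]
    (σ : ℝ) (hσ : 0 < σ) (s : α → ℝ)
    (w : Finset α → ℝ)
    (hw : ∀ S : Finset α, w S = if S = ∅ ∨ S = Finset.univ then 0 else 1)
    (φ : ℝ) (r ρ : α → ℝ) (hφ : 0 ≤ φ)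
    (hρ : ∀ S : Finset α, ∑ v ∈ S, ρ v ≤ w S) (hρe : ∑ v, ρ v = 0)
    (hr : r = φ • ρ)
    (hopt : ∀ (φ' : ℝ) (r' ρ' : α → ℝ), 0 ≤ φ' →
      (∀ S : Finset α, ∑ v ∈ S, ρ' v ≤ w S) → (∑ v, ρ' v = 0) → r' = φ' • ρ' →
      (1/2) * φ ^ 2 + (1/(2*σ)) * ∑ v, (s v - r v) ^ 2 ≤
        (1/2) * φ' ^ 2 + (1/(2*σ)) * ∑ v, (s v - r' v) ^ 2) :
    (∑ v, r v = 0) ∧ ∃ a b : ℝ, b ≤ a ∧ ∀ v : α,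
      (σ * a ≤ s v → r v = s v - σ * a) ∧
      (s v ≤ σ * b → r v = s v - σ * b) ∧
      (σ * b < s v → s v < σ * a → r v = 0) := by
  have hsum : ∑ v, r v = 0 := by
    simp only [hr, Pi.smul_apply, smul_eq_mul, ← Finset.mul_sum, hρe, mul_zero]
  have hbudget : IsBudgetOptimal σ s φ r := by
    refine ⟨hsum, hr ▸ sum_max_zero_le_of_mem_smul_base hw hφ hρ,
      fun φ' r' hφ' hsum' hpos' => hopt φ' r' (φ'⁻¹ • r') hφ'.le
        (inv_smul_mem_base hw hφ' hsum' hpos') ?_ (smul_inv_smul₀ hφ'.ne' r').symm⟩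
    simp only [Pi.smul_apply, smul_eq_mul, ← Finset.mul_sum, hsum', mul_zero]
  obtain ⟨A, B, hBA, hd⟩ := hbudget.exists_thresholds hσ
  refine ⟨hsum, A / σ, B / σ, div_le_div_of_nonneg_right hBA hσ.le, fun v => ?_⟩
  rw [mul_div_cancel₀ _ hσ.ne', mul_div_cancel₀ _ hσ.ne']
  obtain ⟨hBv, hAv, hposv, hnegv⟩ := hd v
  exact threshold_trichotomy hBv hAv hposv hnegv

/-- Threshold structure of the optimal projection for the unit cut-cost: at the
optimum of `min (1/2)φ² + (1/(2σ))‖s − r‖²` over `φ ≥ 0`, `r ∈ φ·B`, there are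
thresholds `a ≥ b` such that `r_v = s_v − σa` where `s_v ≥ σa`,
`r_v = s_v − σb` where `s_v ≤ σb`, and `r_v = 0` otherwise; moreover
`∑_v r_v = 0`. -/
theorem stmt16 {α : Type*} [Fintype α] [DecidableEq α]
    (hcard : 2 ≤ Fintype.card α)
    (σ : ℝ) (hσ : 0 < σ) (s : α → ℝ)
    (w : Finset α → ℝ)
    (hw : ∀ S : Finset α, w S = if S = ∅ ∨ S = Finset.univ then 0 else 1)
    (φ : ℝ) (r ρ : α → ℝ) (hφ : 0 ≤ φ)
    (hρ : ∀ S : Finset α, ∑ v ∈ S, ρ v ≤ w S) (hρe : ∑ v, ρ v = 0)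
    (hr : r = φ • ρ)
    (hopt : ∀ (φ' : ℝ) (r' ρ' : α → ℝ), 0 ≤ φ' →
      (∀ S : Finset α, ∑ v ∈ S, ρ' v ≤ w S) → (∑ v, ρ' v = 0) → r' = φ' • ρ' →
      (1/2) * φ ^ 2 + (1/(2*σ)) * ∑ v, (s v - r v) ^ 2 ≤
        (1/2) * φ' ^ 2 + (1/(2*σ)) * ∑ v, (s v - r' v) ^ 2) :
    (∑ v, r v = 0) ∧ ∃ a b : ℝ, b ≤ a ∧ ∀ v : α,
      (σ * a ≤ s v → r v = s v - σ * a) ∧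
      (s v ≤ σ * b → r v = s v - σ * b) ∧
      (σ * b < s v → s v < σ * a → r v = 0) :=
  stmt16_general σ hσ s w hw φ r ρ hφ hρ hρe hr hopt
end
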